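/- arXiv:2006.05773 — 2 statements merged into one kernel-verified Lean document; each statement's English description precedes it below -/
import Mathlib

section
/- Let F ∈ C⁰(T⁵) and let φ ∈ C²(T⁵) be a solution of equation (★). Then at every point of ℝ⁵ and for every ξ = (ξ₁,ξ₂,ξ₃,ξ₄,ξ₅) ∈ ℝ⁵ one has A ξ₅² + B(ξ₁²+ξ₂²+ξ₃²+ξ₄²) − 2(φ_{15}ξ₁ξ₅ + φ_{25}ξ₂ξ₅ + φ_{35}ξ₃ξ₅ + φ_{45}ξ₄ξ₅) ≥ λ(φ) (ξ₁²+ξ₂²+ξ₃²+ξ₄²+ξ₅²), where λ(φ) = ½(A + B − √((A+B)² − 4e^F)); moreover λ(φ) > 0, so equation (★) is elliptic at any solution. -/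
open MeasureTheory

/-- Partial derivative in the `i`-th coordinate direction. -/
noncomputable def pd {n : ℕ} (i : Fin n) (f : (Fin n → ℝ) → ℝ) : (Fin n → ℝ) → ℝ :=
  fun x => fderiv ℝ f x (Pi.single i 1)

/-- Second partial derivative `∂²f/∂x^i∂x^j`. -/
noncomputable def pd2 {n : ℕ} (i j : Fin n) (f : (Fin n → ℝ) → ℝ) : (Fin n → ℝ) → ℝ :=
  pd i (pd j f)

/-- A function on `ℝⁿ` that is `1`-periodic in every coordinate, i.e. a function on `Tⁿ`. -/
def PeriodicPi {n : ℕ} (f : (Fin n → ℝ) → ℝ) : Prop :=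
  ∀ x : Fin n → ℝ, ∀ i : Fin n, f (x + Pi.single i 1) = f x

/-- The Euclidean Laplacian. -/
noncomputable def lap {n : ℕ} (f : (Fin n → ℝ) → ℝ) : (Fin n → ℝ) → ℝ :=
  fun x => ∑ i, pd2 i i f x

/-- Equation (★): the reduction of the quaternionic Monge–Ampère equation to `T⁵`. -/
def EqStar (F φ : (Fin 5 → ℝ) → ℝ) : Prop :=
  ∀ x : Fin 5 → ℝ,
    (pd2 0 0 φ x + pd2 1 1 φ x + pd2 2 2 φ x + pd2 3 3 φ x + 1) * (pd2 4 4 φ x + 1)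
      - (pd2 0 4 φ x) ^ 2 - (pd2 1 4 φ x) ^ 2 - (pd2 2 4 φ x) ^ 2 - (pd2 3 4 φ x) ^ 2
      = Real.exp (F x)

/-!
At a point, the symbol of (★) is the quadratic form of the symmetric matrix
`[[B·I₄, -p], [-pᵀ, A]]` with `p = (φ₁₅, φ₂₅, φ₃₅, φ₄₅)`, and (★) says `AB - |p|² = e^F`.
Its eigenvalues are `B` and the two roots of `λ² - (A + B)λ + e^F`; the smaller root `λ(φ)` lies
below both `A` and `B`, and `(A - λ)(B - λ) = |p|²`, so subtracting `λ(φ)|ξ|²` leaves a form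
that is nonnegative by Cauchy–Schwarz and AM–GM. Positivity of `λ(φ)` needs `A + B > 0`.
Since `AB = e^F + |p|² > 0`, `B` never vanishes; it equals `1` where `φ₅₅ = 0`, which happens
somewhere by periodicity, so `B > 0` everywhere by connectedness, and then `A > 0`.
-/

open scoped RealInnerProductSpace

section SymbolEigenvalue

noncomputable def minEigenvalue (a b d : ℝ) : ℝ :=
  (1 / 2) * (a + b - Real.sqrt ((a + b) ^ 2 - 4 * d))

variable {a b d : ℝ}

theorem minEigenvalue_comm : minEigenvalue a b d = minEigenvalue b a d := by
  rw [minEigenvalue, minEigenvalue, add_comm a b]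

theorem minEigenvalue_pos (hab : 0 < a + b) (hd : 0 < d) : 0 < minEigenvalue a b d := by
  have : Real.sqrt ((a + b) ^ 2 - 4 * d) < a + b := (Real.sqrt_lt' hab).2 (by linarith)
  unfold minEigenvalue
  linarith

theorem minEigenvalue_le_left (h : d ≤ a * b) : minEigenvalue a b d ≤ a := by
  have : |b - a| ≤ Real.sqrt ((a + b) ^ 2 - 4 * d) :=
    Real.abs_le_sqrt (by nlinarith)
  unfold minEigenvalue
  linarith [le_abs_self (b - a)]

theorem minEigenvalue_le_right (h : d ≤ a * b) : minEigenvalue a b d ≤ b := by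
  rw [minEigenvalue_comm]
  exact minEigenvalue_le_left (mul_comm a b ▸ h)

theorem sub_minEigenvalue_mul_sub (h : d ≤ a * b) :
    (a - minEigenvalue a b d) * (b - minEigenvalue a b d) = a * b - d := by
  have hs : Real.sqrt ((a + b) ^ 2 - 4 * d) ^ 2 = (a + b) ^ 2 - 4 * d :=
    Real.sq_sqrt (by nlinarith [sq_nonneg (a - b)])
  unfold minEigenvalue
  linear_combination (1 / 4) * hs

end SymbolEigenvalue

section InnerProductSpace

variable {E : Type*} [NormedAddCommGroup E] [InnerProductSpace ℝ E]

theorem two_mul_inner_le_of_sq_norm_le {α β : ℝ} {p : E} (hα : 0 ≤ α) (hβ : 0 ≤ β)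
    (hp : ‖p‖ ^ 2 ≤ α * β) (v : E) (t : ℝ) :
    2 * (t * ⟪p, v⟫) ≤ α * t ^ 2 + β * ‖v‖ ^ 2 := by
  have hnorm : ‖p‖ ≤ √α * √β := by
    rw [← Real.sqrt_mul hα]
    exact Real.le_sqrt_of_sq_le hp
  calc 2 * (t * ⟪p, v⟫) ≤ 2 * (|t| * |⟪p, v⟫|) := by
        rw [← abs_mul]
        exact mul_le_mul_of_nonneg_left (le_abs_self _) zero_le_two
    _ ≤ 2 * (|t| * (‖p‖ * ‖v‖)) := by
        gcongr
        exact abs_real_inner_le_norm p v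
    _ ≤ 2 * (√α * |t|) * (√β * ‖v‖) := by
        have := mul_le_mul_of_nonneg_right hnorm (norm_nonneg v)
        have := mul_le_mul_of_nonneg_left this (abs_nonneg t)
        linarith
    _ ≤ (√α * |t|) ^ 2 + (√β * ‖v‖) ^ 2 := two_mul_le_add_sq _ _
    _ = α * t ^ 2 + β * ‖v‖ ^ 2 := by
        rw [mul_pow, mul_pow, Real.sq_sqrt hα, Real.sq_sqrt hβ, sq_abs]

theorem minEigenvalue_mul_le {a b d : ℝ} {p : E} (h : a * b - ‖p‖ ^ 2 = d) (v : E) (t : ℝ) :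
    minEigenvalue a b d * (‖v‖ ^ 2 + t ^ 2) ≤ a * t ^ 2 + b * ‖v‖ ^ 2 - 2 * (t * ⟪p, v⟫) := by
  have hd : d ≤ a * b := by nlinarith [sq_nonneg ‖p‖]
  have hprod := sub_minEigenvalue_mul_sub hd
  have := two_mul_inner_le_of_sq_norm_le (sub_nonneg.2 (minEigenvalue_le_left hd))
    (sub_nonneg.2 (minEigenvalue_le_right hd))
    (by rw [hprod, ← h, sub_sub_cancel]) v t
  linarith

end InnerProductSpace

theorem minEigenvalue_mul_sum_sq_le {a b d p₀ p₁ p₂ p₃ : ℝ}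
    (h : a * b - p₀ ^ 2 - p₁ ^ 2 - p₂ ^ 2 - p₃ ^ 2 = d) (ξ : Fin 5 → ℝ) :
    a * ξ 4 ^ 2 + b * (ξ 0 ^ 2 + ξ 1 ^ 2 + ξ 2 ^ 2 + ξ 3 ^ 2)
        - 2 * (p₀ * ξ 0 * ξ 4 + p₁ * ξ 1 * ξ 4 + p₂ * ξ 2 * ξ 4 + p₃ * ξ 3 * ξ 4)
      ≥ minEigenvalue a b d * (ξ 0 ^ 2 + ξ 1 ^ 2 + ξ 2 ^ 2 + ξ 3 ^ 2 + ξ 4 ^ 2) := by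
  have key := minEigenvalue_mul_le (a := a) (b := b) (d := d) (p := !₂[p₀, p₁, p₂, p₃])
    (by
      simp only [EuclideanSpace.norm_sq_eq, Real.norm_eq_abs, sq_abs, Fin.sum_univ_four,
        Matrix.cons_val_zero, Matrix.cons_val_one, Matrix.cons_val]
      linarith) !₂[ξ 0, ξ 1, ξ 2, ξ 3] (ξ 4)
  simp only [EuclideanSpace.norm_sq_eq, Real.norm_eq_abs, sq_abs, Fin.sum_univ_four,
    Matrix.cons_val_zero, Matrix.cons_val_one, Matrix.cons_val, PiLp.inner_apply,
    RCLike.inner_apply, conj_trivial] at key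
  linarith

section Torus

variable {n : ℕ}

theorem periodicPi_pd {f : (Fin n → ℝ) → ℝ} (hf : PeriodicPi f) (i : Fin n) :
    PeriodicPi (pd i f) := by
  intro x j
  have hshift : (fun y => f (y + Pi.single j 1)) = f := funext fun y => hf y j
  simp only [pd, ← fderiv_comp_add_right, hshift]

theorem contDiff_pd {f : (Fin n → ℝ) → ℝ} {k m : WithTop ℕ∞} (hf : ContDiff ℝ k f)
    (hmk : m + 1 ≤ k) (i : Fin n) : ContDiff ℝ m (pd i f) :=
  (hf.fderiv_right hmk).clm_apply contDiff_const

theorem PeriodicPi.exists_pd_eq_zero {f : (Fin n → ℝ) → ℝ} (hf : PeriodicPi f)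
    (hdiff : Differentiable ℝ f) (i : Fin n) : ∃ x, pd i f x = 0 := by
  set e : Fin n → ℝ := Pi.single i 1
  have hderiv : ∀ t : ℝ, HasDerivAt (fun s : ℝ => f (s • e)) (pd i f (t • e)) t := fun t =>
    (hdiff _).hasFDerivAt.comp_hasDerivAt t (by simpa using (hasDerivAt_id t).smul_const e)
  have hends : f ((0 : ℝ) • e) = f ((1 : ℝ) • e) := by
    simpa [e] using (hf 0 i).symm
  obtain ⟨t, -, ht⟩ := exists_hasDerivAt_eq_zero zero_lt_one
    (fun t _ => (hderiv t).continuousAt.continuousWithinAt) hends (fun t _ => hderiv t)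
  exact ⟨t • e, ht⟩

/-- `∂ᵢ²φ` vanishes somewhere by Rolle's theorem for the periodic `∂ᵢφ`, and a continuous
function that never vanishes on the connected space `ℝⁿ` keeps its sign. -/
theorem pd2_add_one_pos {φ : (Fin n → ℝ) → ℝ} (hφ : ContDiff ℝ 2 φ) (hper : PeriodicPi φ)
    (i : Fin n) (hne : ∀ x, pd2 i i φ x + 1 ≠ 0) (x : Fin n → ℝ) : 0 < pd2 i i φ x + 1 := by
  have hpd : ContDiff ℝ 1 (pd i φ) := contDiff_pd hφ (by norm_num) i
  obtain ⟨x₀, hx₀⟩ := (periodicPi_pd hper i).exists_pd_eq_zero (hpd.differentiable one_ne_zero) i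
  have hcont : Continuous fun y => pd2 i i φ y + 1 :=
    (contDiff_pd (m := 0) hpd (by norm_num) i).continuous.add continuous_const
  by_contra! hx
  obtain ⟨y, hy⟩ := intermediate_value_univ x x₀ hcont ⟨hx, by simp [pd2, hx₀]⟩
  exact hne y hy

end Torus

theorem EqStar.mul_pos {F φ : (Fin 5 → ℝ) → ℝ} (h : EqStar F φ) (x : Fin 5 → ℝ) :
    0 < (pd2 0 0 φ x + pd2 1 1 φ x + pd2 2 2 φ x + pd2 3 3 φ x + 1) * (pd2 4 4 φ x + 1) := by
  nlinarith [h x, Real.exp_pos (F x), sq_nonneg (pd2 0 4 φ x), sq_nonneg (pd2 1 4 φ x),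
    sq_nonneg (pd2 2 4 φ x), sq_nonneg (pd2 3 4 φ x)]

theorem ellipticity_of_eqStar_general
    (F φ : (Fin 5 → ℝ) → ℝ)
    (hφ : ContDiff ℝ 2 φ) (hφper : PeriodicPi φ) (heq : EqStar F φ) :
    ∀ x : Fin 5 → ℝ,
      (0 < (1/2) * ((pd2 0 0 φ x + pd2 1 1 φ x + pd2 2 2 φ x + pd2 3 3 φ x + 1)
              + (pd2 4 4 φ x + 1)
              - Real.sqrt (((pd2 0 0 φ x + pd2 1 1 φ x + pd2 2 2 φ x + pd2 3 3 φ x + 1)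
                  + (pd2 4 4 φ x + 1)) ^ 2 - 4 * Real.exp (F x)))) ∧
      ∀ ξ : Fin 5 → ℝ,
        (pd2 0 0 φ x + pd2 1 1 φ x + pd2 2 2 φ x + pd2 3 3 φ x + 1) * (ξ 4) ^ 2
          + (pd2 4 4 φ x + 1) * ((ξ 0) ^ 2 + (ξ 1) ^ 2 + (ξ 2) ^ 2 + (ξ 3) ^ 2)
          - 2 * (pd2 0 4 φ x * ξ 0 * ξ 4 + pd2 1 4 φ x * ξ 1 * ξ 4
              + pd2 2 4 φ x * ξ 2 * ξ 4 + pd2 3 4 φ x * ξ 3 * ξ 4)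
        ≥ (1/2) * ((pd2 0 0 φ x + pd2 1 1 φ x + pd2 2 2 φ x + pd2 3 3 φ x + 1)
              + (pd2 4 4 φ x + 1)
              - Real.sqrt (((pd2 0 0 φ x + pd2 1 1 φ x + pd2 2 2 φ x + pd2 3 3 φ x + 1)
                  + (pd2 4 4 φ x + 1)) ^ 2 - 4 * Real.exp (F x)))
            * ((ξ 0) ^ 2 + (ξ 1) ^ 2 + (ξ 2) ^ 2 + (ξ 3) ^ 2 + (ξ 4) ^ 2) := by
  have hB : ∀ x, 0 < pd2 4 4 φ x + 1 :=
    pd2_add_one_pos hφ hφper 4 fun x hx => (heq.mul_pos x).ne' (by rw [hx, mul_zero])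
  intro x
  have hA := pos_of_mul_pos_left (heq.mul_pos x) (hB x).le
  exact ⟨minEigenvalue_pos (add_pos hA (hB x)) (Real.exp_pos (F x)),
    minEigenvalue_mul_sum_sq_le (heq x)⟩

/-- Ellipticity of equation (★) at any solution. -/
theorem ellipticity_of_eqStar
    (F φ : (Fin 5 → ℝ) → ℝ) (hF : Continuous F) (hFper : PeriodicPi F)
    (hφ : ContDiff ℝ 2 φ) (hφper : PeriodicPi φ) (heq : EqStar F φ) :
    ∀ x : Fin 5 → ℝ,
      (0 < (1/2) * ((pd2 0 0 φ x + pd2 1 1 φ x + pd2 2 2 φ x + pd2 3 3 φ x + 1)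
              + (pd2 4 4 φ x + 1)
              - Real.sqrt (((pd2 0 0 φ x + pd2 1 1 φ x + pd2 2 2 φ x + pd2 3 3 φ x + 1)
                  + (pd2 4 4 φ x + 1)) ^ 2 - 4 * Real.exp (F x)))) ∧
      ∀ ξ : Fin 5 → ℝ,
        (pd2 0 0 φ x + pd2 1 1 φ x + pd2 2 2 φ x + pd2 3 3 φ x + 1) * (ξ 4) ^ 2
          + (pd2 4 4 φ x + 1) * ((ξ 0) ^ 2 + (ξ 1) ^ 2 + (ξ 2) ^ 2 + (ξ 3) ^ 2)
          - 2 * (pd2 0 4 φ x * ξ 0 * ξ 4 + pd2 1 4 φ x * ξ 1 * ξ 4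
              + pd2 2 4 φ x * ξ 2 * ξ 4 + pd2 3 4 φ x * ξ 3 * ξ 4)
        ≥ (1/2) * ((pd2 0 0 φ x + pd2 1 1 φ x + pd2 2 2 φ x + pd2 3 3 φ x + 1)
              + (pd2 4 4 φ x + 1)
              - Real.sqrt (((pd2 0 0 φ x + pd2 1 1 φ x + pd2 2 2 φ x + pd2 3 3 φ x + 1)
                  + (pd2 4 4 φ x + 1)) ^ 2 - 4 * Real.exp (F x)))
            * ((ξ 0) ^ 2 + (ξ 1) ^ 2 + (ξ 2) ^ 2 + (ξ 3) ^ 2 + (ξ 4) ^ 2) :=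
  ellipticity_of_eqStar_general F φ hφ hφper heq
end

section
/- Let F ∈ C⁰(T⁶) and let φ ∈ C²(T⁶) be a solution of equation (†). Then at every point of ℝ⁶ and for every nonzero ξ = (ξ₁,…,ξ₆) ∈ ℝ⁶ one has B(ξ₁²+ξ₂²+ξ₃²+ξ₄²) + A(ξ₅²+ξ₆²) − 2a₁(ξ₃ξ₅ − ξ₂ξ₆) − 2a₂(ξ₄ξ₅ − ξ₁ξ₆) − 2a₃(ξ₄ξ₆ + ξ₁ξ₅) − 2a₄(ξ₃ξ₆ + ξ₂ξ₅) > 0; in particular equation (†) is elliptic at any solution. -/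
/-! Along a solution `A B = e^F + Σ aᵢ² > 0`, so `B` never vanishes. At a global minimum of the
periodic function `φ` we have `φ₅₅, φ₆₆ ≥ 0`, hence `B ≥ 1` there, and by connectedness `B > 0`
everywhere. Completing the square in `ξ₁, …, ξ₄` then writes `B` times the quadratic form as a sum
of four squares plus `e^F (ξ₅² + ξ₆²)`, which is positive for `ξ ≠ 0`. -/

open MeasureTheory

/-- `A = φ₁₁ + φ₂₂ + φ₃₃ + φ₄₄ + 1` on `T⁶`. -/
noncomputable def A6 (φ : (Fin 6 → ℝ) → ℝ) : (Fin 6 → ℝ) → ℝ :=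
  fun x => pd2 0 0 φ x + pd2 1 1 φ x + pd2 2 2 φ x + pd2 3 3 φ x + 1

/-- `B = φ₅₅ + φ₆₆ + 1` on `T⁶`. -/
noncomputable def B6 (φ : (Fin 6 → ℝ) → ℝ) : (Fin 6 → ℝ) → ℝ :=
  fun x => pd2 4 4 φ x + pd2 5 5 φ x + 1

/-- `a₁ = φ₃₅ − φ₂₆`. -/
noncomputable def a₁6 (φ : (Fin 6 → ℝ) → ℝ) : (Fin 6 → ℝ) → ℝ :=
  fun x => pd2 2 4 φ x - pd2 1 5 φ x

/-- `a₂ = φ₄₅ − φ₁₆`. -/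
noncomputable def a₂6 (φ : (Fin 6 → ℝ) → ℝ) : (Fin 6 → ℝ) → ℝ :=
  fun x => pd2 3 4 φ x - pd2 0 5 φ x

/-- `a₃ = φ₄₆ + φ₁₅`. -/
noncomputable def a₃6 (φ : (Fin 6 → ℝ) → ℝ) : (Fin 6 → ℝ) → ℝ :=
  fun x => pd2 3 5 φ x + pd2 0 4 φ x

/-- `a₄ = φ₃₆ + φ₂₅`. -/
noncomputable def a₄6 (φ : (Fin 6 → ℝ) → ℝ) : (Fin 6 → ℝ) → ℝ :=
  fun x => pd2 2 5 φ x + pd2 1 4 φ x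

/-- Equation (†): the reduction of the quaternionic Monge–Ampère equation on `M₂` to the
base `T⁶` for `T²`-invariant data. -/
def EqDagger (F φ : (Fin 6 → ℝ) → ℝ) : Prop :=
  ∀ x : Fin 6 → ℝ,
    A6 φ x * B6 φ x - (a₁6 φ x) ^ 2 - (a₂6 φ x) ^ 2 - (a₃6 φ x) ^ 2 - (a₄6 φ x) ^ 2
      = Real.exp (F x)

theorem PeriodicPi.periodic_intCast {n : ℕ} {f : (Fin n → ℝ) → ℝ} (hf : PeriodicPi f)
    (m : Fin n → ℤ) : Function.Periodic f fun i => (m i : ℝ) := by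
  rw [← Finset.univ_sum_single fun i => (m i : ℝ)]
  refine Finset.sum_induction _ (Function.Periodic f) (fun _ _ => Function.Periodic.add_period)
    (fun x => by rw [add_zero]) fun i _ => ?_
  have hi : Function.Periodic f (Pi.single i 1) := fun y => hf y i
  have h := hi.zsmul (m i)
  rwa [← Pi.single_zsmul, zsmul_one] at h

theorem PeriodicPi.exists_forall_le {n : ℕ} {f : (Fin n → ℝ) → ℝ} (hf : PeriodicPi f)
    (hc : Continuous f) : ∃ x₀, ∀ y, f x₀ ≤ f y := by
  obtain ⟨x₀, -, hmin⟩ := (isCompact_Icc (a := (0 : Fin n → ℝ)) (b := 1)).exists_isMinOn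
    (Set.nonempty_Icc.2 zero_le_one) hc.continuousOn
  refine ⟨x₀, fun y => ?_⟩
  calc f x₀ ≤ f fun i => Int.fract (y i) :=
        hmin ⟨fun i => Int.fract_nonneg (y i), fun i => (Int.fract_lt_one (y i)).le⟩
    _ = f y := by
        rw [← hf.periodic_intCast (fun i => ⌊y i⌋)]
        congr with i
        exact Int.fract_add_floor (y i)

theorem Continuous.pos_of_forall_ne_zero {X : Type*} [TopologicalSpace X] [PreconnectedSpace X]
    {g : X → ℝ} (hg : Continuous g) (hne : ∀ x, g x ≠ 0) {x₀ : X} (h₀ : 0 < g x₀) (x : X) :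
    0 < g x := by
  by_contra! hx
  obtain ⟨y, hy⟩ := intermediate_value_univ x x₀ hg ⟨hx, h₀.le⟩
  exact hne y hy

theorem IsLocalMin.deriv_deriv_nonneg {f : ℝ → ℝ} {x₀ : ℝ} (h : IsLocalMin f x₀)
    (hc : ContinuousAt f x₀) : 0 ≤ deriv (deriv f) x₀ := by
  by_contra! hneg
  -- the second derivative test would make `x₀` also a local maximum, so `f` is locally constant
  have hmax := isLocalMax_of_deriv_deriv_neg hneg h.deriv_eq_zero hc
  have hconst : f =ᶠ[nhds x₀] fun _ => f x₀ :=
    (h.and hmax).mono fun _ hy => le_antisymm hy.2 hy.1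
  rw [hconst.deriv.deriv_eq, deriv_const', deriv_const] at hneg
  exact hneg.false

theorem deriv_comp_add_smul {E F : Type*} [NormedAddCommGroup E] [NormedSpace ℝ E]
    [NormedAddCommGroup F] [NormedSpace ℝ F] {f : E → F} {x v : E} {t : ℝ}
    (hf : DifferentiableAt ℝ f (x + t • v)) :
    deriv (fun s => f (x + s • v)) t = fderiv ℝ f (x + t • v) v := by
  have h := hf.hasFDerivAt.comp_hasDerivAt t (((hasDerivAt_id t).smul_const v).const_add x)
  simpa [Function.comp_def] using h.deriv

theorem contDiff_pd_s13 {n : ℕ} (i : Fin n) {φ : (Fin n → ℝ) → ℝ} (hφ : ContDiff ℝ 2 φ) :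
    ContDiff ℝ 1 (pd i φ) := by
  have h := hφ.fderiv_right (m := 1) (by norm_num)
  exact (ContinuousLinearMap.apply ℝ ℝ (Pi.single i 1)).contDiff.comp h

theorem continuous_pd2 {n : ℕ} (i j : Fin n) {φ : (Fin n → ℝ) → ℝ} (hφ : ContDiff ℝ 2 φ) :
    Continuous (pd2 i j φ) :=
  (ContinuousLinearMap.apply ℝ ℝ (Pi.single i 1)).continuous.comp
    ((contDiff_pd_s13 j hφ).continuous_fderiv one_ne_zero)

theorem pd2_self_nonneg_of_isLocalMin {n : ℕ} {φ : (Fin n → ℝ) → ℝ} (hφ : ContDiff ℝ 2 φ)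
    {x₀ : Fin n → ℝ} (hmin : IsLocalMin φ x₀) (i : Fin n) : 0 ≤ pd2 i i φ x₀ := by
  set v : Fin n → ℝ := Pi.single i 1
  have hline : Continuous fun t : ℝ => x₀ + t • v := by fun_prop
  have hd1 : deriv (fun t : ℝ => φ (x₀ + t • v)) = fun t => pd i φ (x₀ + t • v) :=
    funext fun t => deriv_comp_add_smul (hφ.differentiable two_ne_zero _)
  have hd2 : deriv (fun t : ℝ => pd i φ (x₀ + t • v)) 0 = pd2 i i φ x₀ := by
    rw [deriv_comp_add_smul ((contDiff_pd_s13 i hφ).differentiable one_ne_zero _), zero_smul, add_zero]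
    rfl
  have hmin' : IsLocalMin (φ ∘ fun t : ℝ => x₀ + t • v) 0 := by
    refine IsLocalMin.comp_continuous ?_ hline.continuousAt
    simpa using hmin
  rw [← hd2, ← hd1]
  exact hmin'.deriv_deriv_nonneg (hφ.continuous.comp hline).continuousAt

theorem B6_pos_of_eqDagger {F φ : (Fin 6 → ℝ) → ℝ} (hφ : ContDiff ℝ 2 φ)
    (hφper : PeriodicPi φ) (heq : EqDagger F φ) (x : Fin 6 → ℝ) : 0 < B6 φ x := by
  have hcont : Continuous (B6 φ) :=
    ((continuous_pd2 4 4 hφ).add (continuous_pd2 5 5 hφ)).add continuous_const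
  have hne : ∀ y, B6 φ y ≠ 0 := by
    intro y hy
    have h := heq y
    rw [hy, mul_zero] at h
    nlinarith [Real.exp_pos (F y), sq_nonneg (a₁6 φ y), sq_nonneg (a₂6 φ y),
      sq_nonneg (a₃6 φ y), sq_nonneg (a₄6 φ y)]
  obtain ⟨x₀, hmin⟩ := hφper.exists_forall_le hφ.continuous
  have h₀ : 0 < B6 φ x₀ := by
    have h₄ := pd2_self_nonneg_of_isLocalMin hφ (Filter.Eventually.of_forall hmin) 4
    have h₅ := pd2_self_nonneg_of_isLocalMin hφ (Filter.Eventually.of_forall hmin) 5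
    simp only [B6]
    linarith
  exact hcont.pos_of_forall_ne_zero hne h₀ x

/-- The principal symbol of the linearisation of (†) at a point where its coefficients are
`A, B, a₁, …, a₄`. -/
def daggerSymbol (A B a₁ a₂ a₃ a₄ : ℝ) (ξ : Fin 6 → ℝ) : ℝ :=
  B * ((ξ 0) ^ 2 + (ξ 1) ^ 2 + (ξ 2) ^ 2 + (ξ 3) ^ 2) + A * ((ξ 4) ^ 2 + (ξ 5) ^ 2)
    - 2 * a₁ * (ξ 2 * ξ 4 - ξ 1 * ξ 5) - 2 * a₂ * (ξ 3 * ξ 4 - ξ 0 * ξ 5)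
    - 2 * a₃ * (ξ 3 * ξ 5 + ξ 0 * ξ 4) - 2 * a₄ * (ξ 2 * ξ 5 + ξ 1 * ξ 4)

theorem daggerSymbol_pos {A B a₁ a₂ a₃ a₄ : ℝ} (hB : 0 < B)
    (hdet : 0 < A * B - a₁ ^ 2 - a₂ ^ 2 - a₃ ^ 2 - a₄ ^ 2) {ξ : Fin 6 → ℝ} (hξ : ξ ≠ 0) :
    0 < daggerSymbol A B a₁ a₂ a₃ a₄ ξ := by
  have hsum : 0 < ∑ i, ξ i ^ 2 := by
    obtain ⟨i, hi⟩ := Function.ne_iff.mp hξ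
    exact Finset.sum_pos' (fun j _ => sq_nonneg (ξ j)) ⟨i, Finset.mem_univ i, sq_pos_of_ne_zero hi⟩
  rw [Fin.sum_univ_six] at hsum
  rcases (by positivity : (0 : ℝ) ≤ ξ 4 ^ 2 + ξ 5 ^ 2).eq_or_lt with hw | hw
  · have h4 : ξ 4 = 0 := by nlinarith [sq_nonneg (ξ 4), sq_nonneg (ξ 5)]
    have h5 : ξ 5 = 0 := by nlinarith [sq_nonneg (ξ 4), sq_nonneg (ξ 5)]
    simp only [daggerSymbol, h4, h5]
    nlinarith
  · have key : B * daggerSymbol A B a₁ a₂ a₃ a₄ ξ =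
        (B * ξ 0 - (a₃ * ξ 4 - a₂ * ξ 5)) ^ 2 + (B * ξ 1 - (a₄ * ξ 4 - a₁ * ξ 5)) ^ 2
          + (B * ξ 2 - (a₁ * ξ 4 + a₄ * ξ 5)) ^ 2 + (B * ξ 3 - (a₂ * ξ 4 + a₃ * ξ 5)) ^ 2
          + (A * B - a₁ ^ 2 - a₂ ^ 2 - a₃ ^ 2 - a₄ ^ 2) * (ξ 4 ^ 2 + ξ 5 ^ 2) := by
      unfold daggerSymbol
      ring
    refine pos_of_mul_pos_right ?_ hB.le
    rw [key]
    have := mul_pos hdet hw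
    positivity

theorem ellipticity_of_eqDagger_general
    (F φ : (Fin 6 → ℝ) → ℝ)
    (hφ : ContDiff ℝ 2 φ) (hφper : PeriodicPi φ) (heq : EqDagger F φ) :
    ∀ x : Fin 6 → ℝ, ∀ ξ : Fin 6 → ℝ, ξ ≠ 0 →
      0 < B6 φ x * ((ξ 0) ^ 2 + (ξ 1) ^ 2 + (ξ 2) ^ 2 + (ξ 3) ^ 2)
          + A6 φ x * ((ξ 4) ^ 2 + (ξ 5) ^ 2)
          - 2 * a₁6 φ x * (ξ 2 * ξ 4 - ξ 1 * ξ 5)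
          - 2 * a₂6 φ x * (ξ 3 * ξ 4 - ξ 0 * ξ 5)
          - 2 * a₃6 φ x * (ξ 3 * ξ 5 + ξ 0 * ξ 4)
          - 2 * a₄6 φ x * (ξ 2 * ξ 5 + ξ 1 * ξ 4) := by
  intro x ξ hξ
  exact daggerSymbol_pos (B6_pos_of_eqDagger hφ hφper heq x) (heq x ▸ Real.exp_pos (F x)) hξ

/-- Ellipticity of equation (†) at any solution. -/
theorem ellipticity_of_eqDagger
    (F φ : (Fin 6 → ℝ) → ℝ) (hF : Continuous F) (hFper : PeriodicPi F)
    (hφ : ContDiff ℝ 2 φ) (hφper : PeriodicPi φ) (heq : EqDagger F φ) :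
    ∀ x : Fin 6 → ℝ, ∀ ξ : Fin 6 → ℝ, ξ ≠ 0 →
      0 < B6 φ x * ((ξ 0) ^ 2 + (ξ 1) ^ 2 + (ξ 2) ^ 2 + (ξ 3) ^ 2)
          + A6 φ x * ((ξ 4) ^ 2 + (ξ 5) ^ 2)
          - 2 * a₁6 φ x * (ξ 2 * ξ 4 - ξ 1 * ξ 5)
          - 2 * a₂6 φ x * (ξ 3 * ξ 4 - ξ 0 * ξ 5)
          - 2 * a₃6 φ x * (ξ 3 * ξ 5 + ξ 0 * ξ 4)
          - 2 * a₄6 φ x * (ξ 2 * ξ 5 + ξ 1 * ξ 4) :=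
  ellipticity_of_eqDagger_general F φ hφ hφper heq
end
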